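/- Let Q_O, Q_T : Δ(S) × A → ℝ be bounded functions with Q_O = H_OTIB Q_O and Q_T = H_TIB Q_T. Then for every belief b ∈ Δ(S) and every a ∈ A: Q_O(b,a) ≤ Q_T(b,a) (the optimized tighter informed bound is at least as tight as the tighter informed bound). -/

import Mathlib

/-! At the canonical weights `w_{b,a,o}` the objective of the infimum in `H_OTIB` is exactly the
`H_TIB` term, so `H_OTIB Q ≤ H_TIB Q` whenever `Q` is bounded below. Since the coefficients
`b(s)·Pr(o|s,a)` of `H_TIB` sum to one, `Q ≤ Q' + D` implies `H_TIB Q ≤ H_TIB Q' + γ D`. For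
`D = sup (Q_O - Q_T)` this gives `Q_O = H_OTIB Q_O ≤ H_TIB Q_O ≤ Q_T + γ D`, hence `D ≤ γ D`
and `D ≤ 0`. -/

open Finset
open scoped Classical

set_option linter.unusedSectionVars false

/-- A belief (probability distribution) over a finite state space `S`. -/
structure Belief (S : Type*) [Fintype S] where
  val : S → ℝ
  nonneg : ∀ s, 0 ≤ val s
  sum_one : ∑ s, val s = 1

/-- The convex combination `l • b₁ + (1-l) • b₂` of two beliefs. -/
noncomputable def Belief.mix {S : Type*} [Fintype S] (b₁ b₂ : Belief S) (l : ℝ)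
    (h0 : 0 ≤ l) (h1 : l ≤ 1) : Belief S where
  val s := l * b₁.val s + (1 - l) * b₂.val s
  nonneg s := add_nonneg (mul_nonneg h0 (b₁.nonneg s))
    (mul_nonneg (by linarith) (b₂.nonneg s))
  sum_one := by
    rw [Finset.sum_add_distrib, ← Finset.mul_sum, ← Finset.mul_sum, b₁.sum_one, b₂.sum_one]
    ring

/-- `Q : Δ(S) × A → ℝ` is convex in the belief. -/
def ConvexInBelief {S A : Type*} [Fintype S] (Q : Belief S → A → ℝ) : Prop :=
  ∀ (a : A) (b₁ b₂ : Belief S) (l : ℝ) (h0 : 0 ≤ l) (h1 : l ≤ 1),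
    Q (Belief.mix b₁ b₂ l h0 h1) a ≤ l * Q b₁ a + (1 - l) * Q b₂ a

/-- A finite POMDP: transition function `T s a s' = T(s'|s,a)`, observation function
`Z a s' o = Ω(o|a,s')`, rewards `R`, discount `γ ∈ (0,1)`. -/
structure POMDP (S A O : Type*) [Fintype S] [Fintype A] [Fintype O] where
  T : S → A → S → ℝ
  T_nonneg : ∀ s a s', 0 ≤ T s a s'
  T_sum_one : ∀ s a, ∑ s', T s a s' = 1
  Z : A → S → O → ℝ
  Z_nonneg : ∀ a s' o, 0 ≤ Z a s' o
  Z_sum_one : ∀ a s', ∑ o, Z a s' o = 1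
  R : S → A → ℝ
  γ : ℝ
  γ_pos : 0 < γ
  γ_lt_one : γ < 1

namespace POMDP

variable {S A O : Type*} [Fintype S] [Fintype A] [Fintype O] [Nonempty S] [Nonempty A]
  [Nonempty O]
variable (M : POMDP S A O)

/-- `Pr(s',o|s,a)` -/
def prSO (s : S) (a : A) (s' : S) (o : O) : ℝ := M.Z a s' o * M.T s a s'

lemma prSO_nonneg (s : S) (a : A) (s' : S) (o : O) : 0 ≤ M.prSO s a s' o :=
  mul_nonneg (M.Z_nonneg a s' o) (M.T_nonneg s a s')

/-- `Pr(o|s,a)` -/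
def prO (s : S) (a : A) (o : O) : ℝ := ∑ s', M.prSO s a s' o

/-- `Pr(s',o|b,a)` -/
def bprSO (b : Belief S) (a : A) (s' : S) (o : O) : ℝ := ∑ s, b.val s * M.prSO s a s' o

lemma bprSO_nonneg (b : Belief S) (a : A) (s' : S) (o : O) : 0 ≤ M.bprSO b a s' o :=
  Finset.sum_nonneg fun s _ => mul_nonneg (b.nonneg s) (M.prSO_nonneg s a s' o)

/-- `Pr(o|b,a)` -/
def bprO (b : Belief S) (a : A) (o : O) : ℝ := ∑ s', M.bprSO b a s' o

/-- The unit belief `δ_s`. -/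
noncomputable def unit (s : S) : Belief S where
  val s' := if s' = s then 1 else 0
  nonneg s' := by by_cases h : s' = s <;> simp [h]
  sum_one := by simp

/-- The posterior belief `b_{b,a,o}`, defined when `Pr(o|b,a) > 0`. -/
noncomputable def post (b : Belief S) (a : A) (o : O) (h : 0 < M.bprO b a o) : Belief S where
  val s' := M.bprSO b a s' o / M.bprO b a o
  nonneg s' := div_nonneg (M.bprSO_nonneg b a s' o) h.le
  sum_one := by
    rw [← Finset.sum_div]
    exact div_self (ne_of_gt h)

/-- The one-step belief `b_{s,a,o} = b_{δ_s,a,o}`, defined when `Pr(o|s,a) > 0`. -/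
noncomputable def osb (s : S) (a : A) (o : O) (h : 0 < M.prO s a o) : Belief S where
  val s' := M.prSO s a s' o / M.prO s a o
  nonneg s' := div_nonneg (M.prSO_nonneg s a s' o) h.le
  sum_one := by
    unfold prO
    rw [← Finset.sum_div]
    exact div_self (ne_of_gt h)

/-- Expected reward `R(b,a)`. -/
noncomputable def expR (b : Belief S) (a : A) : ℝ := ∑ s, b.val s * M.R s a

/-- The fast informed bound operator `H_FIB`. -/
noncomputable def HFIB (Q : Belief S → A → ℝ) (b : Belief S) (a : A) : ℝ :=
  M.expR b a + M.γ * ∑ o, Finset.univ.sup' Finset.univ_nonempty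
    (fun a' => ∑ s', M.bprSO b a s' o * Q (unit s') a')

/-- The tighter informed bound operator `H_TIB`. -/
noncomputable def HTIB (Q : Belief S → A → ℝ) (b : Belief S) (a : A) : ℝ :=
  M.expR b a + M.γ * ∑ o, Finset.univ.sup' Finset.univ_nonempty
    (fun a' => ∑ s, if h : 0 < M.prO s a o then
      b.val s * M.prO s a o * Q (M.osb s a o h) a' else 0)

/-- The optimal Bellman operator `H_POMDP`. -/
noncomputable def HPOMDP (Q : Belief S → A → ℝ) (b : Belief S) (a : A) : ℝ :=
  M.expR b a + M.γ * ∑ o, if h : 0 < M.bprO b a o then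
    M.bprO b a o * Finset.univ.sup' Finset.univ_nonempty (fun a' => Q (M.post b a o h) a')
  else 0

/-- Index type for the family `B_SAO`: `none` indexes the initial belief `b₀`,
`some (s,a,o)` (with `Pr(o|s,a) > 0`) indexes the one-step belief `b_{s,a,o}`. -/
abbrev OSIdx : Type _ := Option {x : S × A × O // 0 < M.prO x.1 x.2.1 x.2.2}

/-- The member of the family `B_SAO` (with initial belief `b₀`) at a given index. -/
noncomputable def member (b₀ : Belief S) : M.OSIdx → Belief S
  | none => b₀
  | some x => M.osb x.1.1 x.1.2.1 x.1.2.2 x.2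

/-- `w` is a weight function for the belief `tgt` over the family `B_SAO`. -/
def IsWeight (b₀ : Belief S) (tgt : Belief S) (w : M.OSIdx → ℝ) : Prop :=
  (∀ i, 0 ≤ w i) ∧ ∀ s, ∑ i, w i * (M.member b₀ i).val s = tgt.val s

/-- The optimized tighter informed bound operator `H_OTIB`. -/
noncomputable def HOTIB (b₀ : Belief S) (Q : Belief S → A → ℝ) (b : Belief S) (a : A) : ℝ :=
  M.expR b a + M.γ * ∑ o, if h : 0 < M.bprO b a o then
    Finset.univ.sup' Finset.univ_nonempty (fun a' =>
      M.bprO b a o * ⨅ w : {w : M.OSIdx → ℝ // M.IsWeight b₀ (M.post b a o h) w},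
        ∑ i, (w : M.OSIdx → ℝ) i * Q (M.member b₀ i) a')
  else 0

/-- The operator `H_ŵ` induced by a weight selection `W`. -/
noncomputable def Hsel (b₀ : Belief S)
    (W : ∀ (b : Belief S) (a : A) (o : O), 0 < M.bprO b a o → (M.OSIdx → ℝ))
    (Q : Belief S → A → ℝ) (b : Belief S) (a : A) : ℝ :=
  M.expR b a + M.γ * ∑ o, if h : 0 < M.bprO b a o then
    Finset.univ.sup' Finset.univ_nonempty (fun a' =>
      M.bprO b a o * ∑ i, W b a o h i * Q (M.member b₀ i) a')
  else 0

end POMDP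

theorem nonpos_of_forall_le_mul_of_lt_one {ι : Type*} {f : ι → ℝ} {γ : ℝ} (hγ : γ < 1)
    (hf : BddAbove (Set.range f)) (h : ∀ D, (∀ i, f i ≤ D) → ∀ i, f i ≤ γ * D) :
    ∀ i, f i ≤ 0 := by
  intro i
  have : Nonempty ι := ⟨i⟩
  have hsup : ⨆ j, f j ≤ γ * ⨆ j, f j := ciSup_le (h _ fun j => le_ciSup hf j)
  have hsup_nonpos : ⨆ j, f j ≤ 0 := by nlinarith
  exact (le_ciSup hf i).trans hsup_nonpos

namespace POMDP

section

variable {S A O : Type*} [Fintype S] [Fintype A] [Fintype O] (M : POMDP S A O)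

lemma sum_prO (s : S) (a : A) : ∑ o, M.prO s a o = 1 := by
  simp only [prO, prSO]
  rw [Finset.sum_comm]
  simp only [← Finset.sum_mul, M.Z_sum_one, one_mul, M.T_sum_one]

lemma bprO_eq_sum (b : Belief S) (a : A) (o : O) :
    M.bprO b a o = ∑ s, b.val s * M.prO s a o := by
  simp only [bprO, bprSO, prO, Finset.mul_sum]
  exact Finset.sum_comm

lemma sum_bprO (b : Belief S) (a : A) : ∑ o, M.bprO b a o = 1 := by
  simp only [bprO_eq_sum]
  rw [Finset.sum_comm]
  simp only [← Finset.mul_sum, sum_prO, mul_one, b.sum_one]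

end

variable {S A O : Type*} [Fintype S] [Fintype A] [Fintype O] [Nonempty S] [Nonempty A]
  [Nonempty O] (M : POMDP S A O)

lemma prO_nonneg (s : S) (a : A) (o : O) : 0 ≤ M.prO s a o :=
  Finset.sum_nonneg fun s' _ => M.prSO_nonneg s a s' o

lemma prO_eq_zero_of_not_pos {s : S} {a : A} {o : O} (h : ¬ 0 < M.prO s a o) :
    M.prO s a o = 0 :=
  le_antisymm (not_lt.mp h) (M.prO_nonneg s a o)

lemma prSO_eq_zero_of_prO_eq_zero {s : S} {a : A} {o : O} (h : M.prO s a o = 0) (s' : S) :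
    M.prSO s a s' o = 0 :=
  (Finset.sum_eq_zero_iff_of_nonneg fun s' _ => M.prSO_nonneg s a s' o).mp h s'
    (Finset.mem_univ s')

lemma mul_prO_eq_zero_of_not_bprO_pos {b : Belief S} {a : A} {o : O}
    (h : ¬ 0 < M.bprO b a o) (s : S) : b.val s * M.prO s a o = 0 := by
  have hnonneg : ∀ s ∈ Finset.univ, 0 ≤ b.val s * M.prO s a o :=
    fun s _ => mul_nonneg (b.nonneg s) (M.prO_nonneg s a o)
  have hzero : ∑ s, b.val s * M.prO s a o = 0 :=
    le_antisymm ((M.bprO_eq_sum b a o).symm.trans_le (not_lt.mp h))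
      (Finset.sum_nonneg hnonneg)
  exact (Finset.sum_eq_zero_iff_of_nonneg hnonneg).mp hzero s (Finset.mem_univ s)

lemma sum_eq_one_of_isWeight {b₀ tgt : Belief S} {w : M.OSIdx → ℝ}
    (hw : M.IsWeight b₀ tgt w) : ∑ i, w i = 1 := by
  calc ∑ i, w i = ∑ i, ∑ s, w i * (M.member b₀ i).val s := by
        simp only [← Finset.mul_sum, Belief.sum_one, mul_one]
    _ = 1 := by rw [Finset.sum_comm]; simp only [hw.2, tgt.sum_one]

noncomputable def canonicalWeight (b : Belief S) (a : A) (o : O) : M.OSIdx → ℝ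
  | none => 0
  | some x => if x.1.2 = (a, o) then b.val x.1.1 * M.prO x.1.1 a o / M.bprO b a o else 0

lemma sum_canonicalWeight_mul (b₀ b : Belief S) (a : A) (o : O) (f : Belief S → ℝ) :
    ∑ i, M.canonicalWeight b a o i * f (M.member b₀ i)
      = ∑ s, if h : 0 < M.prO s a o then
          b.val s * M.prO s a o / M.bprO b a o * f (M.osb s a o h) else 0 := by
  symm
  calc _ = ∑ s : {s // 0 < M.prO s a o},
        b.val s * M.prO s a o / M.bprO b a o * f (M.osb s a o s.2) :=
        (Fintype.sum_of_injective Subtype.val Subtype.val_injective _ _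
          (fun s hs => dif_neg fun h => hs ⟨⟨s, h⟩, rfl⟩) fun s => by rw [dif_pos s.2]).symm
    _ = _ := by
      refine Fintype.sum_of_injective (fun s => some ⟨(s.1, a, o), s.2⟩) ?_ _ _ ?_ ?_
      · intro s t hst
        exact Subtype.ext (by simpa using hst)
      · rintro (_ | ⟨⟨s, a', o'⟩, h⟩) hi
        · simp [canonicalWeight]
        · have hao : ¬ (a', o') = (a, o) := by
            rintro ⟨rfl, rfl⟩
            exact hi ⟨⟨s, h⟩, rfl⟩
          simp [canonicalWeight, hao]
      · intro s
        simp [canonicalWeight, member]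

lemma canonicalWeight_isWeight (b₀ b : Belief S) (a : A) (o : O) (h : 0 < M.bprO b a o) :
    M.IsWeight b₀ (M.post b a o h) (M.canonicalWeight b a o) := by
  refine ⟨?_, fun s' => ?_⟩
  · rintro (_ | ⟨⟨s, a', o'⟩, hs⟩)
    · exact le_rfl
    · simp only [canonicalWeight]
      split_ifs
      · exact div_nonneg (mul_nonneg (b.nonneg s) (M.prO_nonneg s a o)) h.le
      · exact le_rfl
  · rw [M.sum_canonicalWeight_mul b₀ b a o fun b' => b'.val s']
    have hterm : ∀ s, (if hs : 0 < M.prO s a o then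
        b.val s * M.prO s a o / M.bprO b a o * (M.osb s a o hs).val s' else 0)
        = b.val s * M.prSO s a s' o / M.bprO b a o := by
      intro s
      split_ifs with hs
      · simp only [osb]
        field_simp
      · rw [M.prSO_eq_zero_of_prO_eq_zero (M.prO_eq_zero_of_not_pos hs), mul_zero, zero_div]
    simp only [hterm, ← Finset.sum_div, post, bprSO]

lemma HOTIB_le_HTIB (b₀ : Belief S) {Q : Belief S → A → ℝ} {C : ℝ}
    (hC : ∀ b a, C ≤ Q b a) (b : Belief S) (a : A) : M.HOTIB b₀ Q b a ≤ M.HTIB Q b a := by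
  refine add_le_add_right (mul_le_mul_of_nonneg_left
    (Finset.sum_le_sum fun o _ => ?_) M.γ_pos.le) _
  split_ifs with h
  · refine Finset.sup'_mono_fun fun a' _ => ?_
    have hbdd : BddBelow (Set.range fun w : {w // M.IsWeight b₀ (M.post b a o h) w} =>
        ∑ i, (w : M.OSIdx → ℝ) i * Q (M.member b₀ i) a') := by
      refine ⟨C, ?_⟩
      rintro _ ⟨w, rfl⟩
      calc C = ∑ i, (w : M.OSIdx → ℝ) i * C := by
            rw [← Finset.sum_mul, M.sum_eq_one_of_isWeight w.2, one_mul]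
        _ ≤ _ := Finset.sum_le_sum fun i _ => mul_le_mul_of_nonneg_left (hC _ _) (w.2.1 i)
    calc M.bprO b a o * ⨅ w : {w // M.IsWeight b₀ (M.post b a o h) w},
          ∑ i, (w : M.OSIdx → ℝ) i * Q (M.member b₀ i) a'
        ≤ M.bprO b a o * ∑ i, M.canonicalWeight b a o i * Q (M.member b₀ i) a' :=
          mul_le_mul_of_nonneg_left
            (ciInf_le hbdd ⟨_, M.canonicalWeight_isWeight b₀ b a o h⟩) h.le
      _ = _ := by
          rw [M.sum_canonicalWeight_mul b₀ b a o fun b' => Q b' a', Finset.mul_sum]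
          refine Finset.sum_congr rfl fun s _ => ?_
          split_ifs
          · field_simp
          · rw [mul_zero]
  · have hzero : ∀ a', (∑ s, if hs : 0 < M.prO s a o then
        b.val s * M.prO s a o * Q (M.osb s a o hs) a' else 0) = 0 := fun a' =>
      Finset.sum_eq_zero fun s _ => by
        split_ifs
        · rw [M.mul_prO_eq_zero_of_not_bprO_pos h s, zero_mul]
        · rfl
    simp only [hzero, Finset.sup'_const, le_refl]

lemma HTIB_le_add {Q Q' : Belief S → A → ℝ} {D : ℝ} (hQ : ∀ b a, Q b a ≤ Q' b a + D)
    (b : Belief S) (a : A) : M.HTIB Q b a ≤ M.HTIB Q' b a + M.γ * D := by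
  have hobs : ∀ o, Finset.univ.sup' Finset.univ_nonempty (fun a' => ∑ s,
        if h : 0 < M.prO s a o then b.val s * M.prO s a o * Q (M.osb s a o h) a' else 0)
      ≤ Finset.univ.sup' Finset.univ_nonempty (fun a' => ∑ s,
        if h : 0 < M.prO s a o then b.val s * M.prO s a o * Q' (M.osb s a o h) a' else 0)
        + M.bprO b a o * D := by
    intro o
    refine Finset.sup'_le _ _ fun a' _ => ?_
    refine le_trans ?_ (add_le_add_left (Finset.le_sup' (fun a' => ∑ s,
      if h : 0 < M.prO s a o then b.val s * M.prO s a o * Q' (M.osb s a o h) a' else 0)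
      (Finset.mem_univ a')) _)
    rw [M.bprO_eq_sum, Finset.sum_mul, ← Finset.sum_add_distrib]
    refine Finset.sum_le_sum fun s _ => ?_
    split_ifs with h
    · nlinarith [hQ (M.osb s a o h) a', mul_nonneg (b.nonneg s) h.le]
    · simp [M.prO_eq_zero_of_not_pos h]
  have hsum := Finset.sum_le_sum fun o (_ : o ∈ Finset.univ) => hobs o
  rw [Finset.sum_add_distrib, ← Finset.sum_mul, M.sum_bprO, one_mul] at hsum
  simp only [HTIB]
  nlinarith [M.γ_pos]

end POMDP

/-- The optimized tighter informed bound is at least as tight as the tighter informed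
bound: bounded fixed points satisfy `Q_OTIB ≤ Q_TIB` pointwise. -/
theorem QOTIB_le_QTIB {S A O : Type*} [Fintype S] [Fintype A] [Fintype O]
    [Nonempty S] [Nonempty A] [Nonempty O] (M : POMDP S A O) (b₀ : Belief S)
    (QO QT : Belief S → A → ℝ)
    (hQObdd : ∃ C : ℝ, ∀ b a, |QO b a| ≤ C) (hQTbdd : ∃ C : ℝ, ∀ b a, |QT b a| ≤ C)
    (hQO : ∀ b a, QO b a = M.HOTIB b₀ QO b a) (hQT : ∀ b a, QT b a = M.HTIB QT b a)
    (b : Belief S) (a : A) :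
    QO b a ≤ QT b a := by
  obtain ⟨C, hC⟩ := hQObdd
  obtain ⟨C', hC'⟩ := hQTbdd
  have hQO_le : ∀ b a, QO b a ≤ M.HTIB QO b a := fun b a =>
    (hQO b a).trans_le (M.HOTIB_le_HTIB b₀ (fun b a => neg_le_of_abs_le (hC b a)) b a)
  have hbdd : BddAbove (Set.range fun p : Belief S × A => QO p.1 p.2 - QT p.1 p.2) := by
    refine ⟨C + C', ?_⟩
    rintro _ ⟨p, rfl⟩
    linarith [le_of_abs_le (hC p.1 p.2), neg_le_of_abs_le (hC' p.1 p.2)]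
  have hcontract : ∀ D, (∀ p : Belief S × A, QO p.1 p.2 - QT p.1 p.2 ≤ D) →
      ∀ p : Belief S × A, QO p.1 p.2 - QT p.1 p.2 ≤ M.γ * D := by
    intro D hD p
    have := M.HTIB_le_add (Q := QO) (Q' := QT) (fun b a => by linarith [hD (b, a)]) p.1 p.2
    linarith [hQO_le p.1 p.2, hQT p.1 p.2]
  exact sub_nonpos.mp (nonpos_of_forall_le_mul_of_lt_one M.γ_lt_one hbdd hcontract (b, a))
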